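/- arXiv:2407.12733 — 3 statements merged into one kernel-verified Lean document; each statement's English description precedes it below -/
import Mathlib

section
/- Let λ_1, ..., λ_n ≥ 0, g_i = 1/(1+λ_i²), and let a_{ijk} be real numbers symmetric in all three indices. Then Σ_{i,j,k} g_i g_j g_k (λ_i+λ_j)² a_{ijk}² − 4 Σ_{i,j,k} g_i g_j g_k λ_i λ_k a_{ijk}² − 2 Σ_{i,j,k} g_i g_j g_k λ_j² a_{ijk}² = −2 Σ_{i,j,k} g_i g_j g_k λ_i λ_k a_{ijk}², and this quantity is ≤ 0. -/
theorem stmt3 (n : ℕ) (lam : Fin n → ℝ) (hlam : ∀ i, 0 ≤ lam i)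
    (g : Fin n → ℝ) (hg : ∀ i, g i = 1 / (1 + (lam i) ^ 2))
    (a : Fin n → Fin n → Fin n → ℝ)
    (hsym : ∀ i j k, a i j k = a j i k ∧ a i j k = a i k j) :
    (∑ i, ∑ j, ∑ k, g i * g j * g k * (lam i + lam j) ^ 2 * (a i j k) ^ 2)
      - 4 * ∑ i, ∑ j, ∑ k, g i * g j * g k * lam i * lam k * (a i j k) ^ 2
      - 2 * ∑ i, ∑ j, ∑ k, g i * g j * g k * (lam j) ^ 2 * (a i j k) ^ 2
      = -2 * ∑ i, ∑ j, ∑ k, g i * g j * g k * lam i * lam k * (a i j k) ^ 2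
    ∧ -2 * (∑ i, ∑ j, ∑ k, g i * g j * g k * lam i * lam k * (a i j k) ^ 2) ≤ 0 := by
  have hgpos : ∀ i, 0 ≤ g i := by
    intro i
    rw [hg i]
    positivity
  have hD : (0:ℝ) ≤ ∑ i, ∑ j, ∑ k, g i * g j * g k * lam i * lam k * (a i j k) ^ 2 := by
    refine Finset.sum_nonneg fun i _ => Finset.sum_nonneg fun j _ => Finset.sum_nonneg fun k _ => ?_
    have := hgpos i; have := hgpos j; have := hgpos k
    have := hlam i; have := hlam k
    positivity
  -- B = A : swap i and j
  have h1 : (∑ i, ∑ j, ∑ k, g i * g j * g k * (lam j) ^ 2 * (a i j k) ^ 2)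
      = ∑ i, ∑ j, ∑ k, g i * g j * g k * (lam i) ^ 2 * (a i j k) ^ 2 := by
    rw [Finset.sum_comm]
    refine Finset.sum_congr rfl fun i _ => Finset.sum_congr rfl fun j _ =>
      Finset.sum_congr rfl fun k _ => ?_
    rw [← (hsym i j k).1]
    ring
  -- C = D : swap j and k
  have h2 : (∑ i, ∑ j, ∑ k, g i * g j * g k * (lam i * lam j) * (a i j k) ^ 2)
      = ∑ i, ∑ j, ∑ k, g i * g j * g k * lam i * lam k * (a i j k) ^ 2 := by
    refine Finset.sum_congr rfl fun i _ => ?_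
    rw [Finset.sum_comm]
    refine Finset.sum_congr rfl fun j _ => Finset.sum_congr rfl fun k _ => ?_
    rw [← (hsym i j k).2]
    ring
  have hsplit : (∑ i, ∑ j, ∑ k, g i * g j * g k * (lam i + lam j) ^ 2 * (a i j k) ^ 2)
      = (∑ i, ∑ j, ∑ k, g i * g j * g k * (lam i) ^ 2 * (a i j k) ^ 2)
        + 2 * (∑ i, ∑ j, ∑ k, g i * g j * g k * (lam i * lam j) * (a i j k) ^ 2)
        + (∑ i, ∑ j, ∑ k, g i * g j * g k * (lam j) ^ 2 * (a i j k) ^ 2) := by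
    simp only [Finset.mul_sum, ← Finset.sum_add_distrib]
    refine Finset.sum_congr rfl fun i _ => Finset.sum_congr rfl fun j _ =>
      Finset.sum_congr rfl fun k _ => ?_
    ring
  constructor
  · rw [hsplit, h1, h2]
    ring
  · linarith
end

section
/- Let u be a smooth solution of u_t = Σ_{i=1}^n arctan λ_i(D²u) on B̄_R(0) × [0, 1/n]. Then u(0, 1/n) ≤ arctan(π/R²) + max_{B̄_R(0)×{0}} u. -/
open Set Filter Topology

section AuxStmt6

private lemma derivA' {f : ℝ → ℝ} {a b f' : ℝ} (hab : a < b) (hf : HasDerivAt f f' b)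
    (hmax : ∀ t ∈ Set.Icc a b, f t ≤ f b) : 0 ≤ f' := by
  have h := hasDerivAt_iff_tendsto_slope.1 hf
  have h2 : Filter.Tendsto (slope f b) (𝓝[<] b) (𝓝 f') :=
    h.mono_left (nhdsWithin_mono _ (fun x hx => ne_of_lt hx))
  refine ge_of_tendsto h2 ?_
  filter_upwards [Ico_mem_nhdsLT_of_mem ⟨hab, le_refl b⟩] with t ht
  have h1 : f t ≤ f b := hmax t ⟨ht.1, le_of_lt ht.2⟩
  have hden : t - b < 0 := sub_neg.2 ht.2
  rw [slope_def_field, div_nonneg_iff]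
  right
  exact ⟨by linarith, le_of_lt hden⟩

private lemma derivB' {g g' g'' : ℝ → ℝ} {δ : ℝ} (hδ : 0 < δ)
    (hg' : ∀ s ∈ Set.Ioo (-δ) δ, HasDerivAt g (g' s) s)
    (hg'' : ∀ s ∈ Set.Ioo (-δ) δ, HasDerivAt g' (g'' s) s)
    (hcont : ContinuousAt g'' 0)
    (hmax : ∀ s ∈ Set.Ioo (-δ) δ, g s ≤ g 0) : g'' 0 ≤ 0 := by
  by_contra h
  push_neg at h
  have h0 : (0:ℝ) ∈ Set.Ioo (-δ) δ := by constructor <;> simpa using hδ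
  have hev : ∀ᶠ s in 𝓝 (0:ℝ), 0 < g'' s := hcont.eventually (eventually_gt_nhds h)
  obtain ⟨η, hη, hpos⟩ := Metric.eventually_nhds_iff.1 hev
  set m := min (η/2) (δ/2) with hm
  have hmpos : 0 < m := lt_min (by linarith) (by linarith)
  have hmδ : m < δ := lt_of_le_of_lt (min_le_right _ _) (by linarith)
  have hmη : m < η := lt_of_le_of_lt (min_le_left _ _) (by linarith)
  have hsub : Set.Icc (0:ℝ) m ⊆ Set.Ioo (-δ) δ := fun s hs =>
    ⟨by linarith [hs.1], lt_of_le_of_lt hs.2 hmδ⟩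
  have hloc : IsLocalMax g 0 := by
    filter_upwards [Metric.ball_mem_nhds (0:ℝ) hδ] with s hs
    rw [Metric.mem_ball, Real.dist_eq, sub_zero] at hs
    exact hmax s (abs_lt.1 hs)
  have hg'0 : g' 0 = 0 := by
    have := hloc.deriv_eq_zero
    rwa [(hg' 0 h0).deriv] at this
  have hg'mono : StrictMonoOn g' (Set.Icc 0 m) := by
    apply strictMonoOn_of_deriv_pos (convex_Icc 0 m)
    · exact fun s hs => ((hg'' s (hsub hs)).continuousAt).continuousWithinAt
    · intro s hs
      rw [interior_Icc] at hs
      rw [(hg'' s (hsub ⟨hs.1.le, hs.2.le⟩)).deriv]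
      apply hpos
      rw [Real.dist_eq, sub_zero, abs_of_nonneg hs.1.le]
      exact hs.2.trans hmη
  have hgmono : StrictMonoOn g (Set.Icc 0 m) := by
    apply strictMonoOn_of_deriv_pos (convex_Icc 0 m)
    · exact fun s hs => ((hg' s (hsub hs)).continuousAt).continuousWithinAt
    · intro s hs
      rw [interior_Icc] at hs
      rw [(hg' s (hsub ⟨hs.1.le, hs.2.le⟩)).deriv]
      have := hg'mono (Set.left_mem_Icc.2 hmpos.le) ⟨hs.1.le, hs.2.le⟩ hs.1
      rwa [hg'0] at this
  have := hgmono (Set.left_mem_Icc.2 hmpos.le) (Set.right_mem_Icc.2 hmpos.le) hmpos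
  exact absurd (hmax m (hsub (Set.right_mem_Icc.2 hmpos.le))) (not_le.2 this)

private lemma euclid_decomp' {n : ℕ} (v : EuclideanSpace ℝ (Fin n)) :
    v = ∑ j, v j • EuclideanSpace.single j (1:ℝ) := by
  have := (EuclideanSpace.basisFun (Fin n) ℝ).sum_repr v
  simp only [EuclideanSpace.basisFun_repr, EuclideanSpace.basisFun_apply] at this
  exact this.symm

private lemma quad_expand' {n : ℕ}
    (B : EuclideanSpace ℝ (Fin n) →L[ℝ] EuclideanSpace ℝ (Fin n) →L[ℝ] ℝ)
    (v : EuclideanSpace ℝ (Fin n)) :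
    B v v = ∑ j, ∑ k, B (EuclideanSpace.single j 1) (EuclideanSpace.single k 1) * v j * v k := by
  have hv := euclid_decomp' v
  have key : ∀ w : EuclideanSpace ℝ (Fin n) →L[ℝ] ℝ,
      w v = ∑ k, w (EuclideanSpace.single k 1) * v k := by
    intro w
    conv_lhs => rw [hv]
    rw [map_sum]
    exact Finset.sum_congr rfl fun k _ => by rw [map_smul, smul_eq_mul]; ring
  have hBv : ∀ k : Fin n, (B v) (EuclideanSpace.single k 1)
      = ∑ j, v j * B (EuclideanSpace.single j 1) (EuclideanSpace.single k 1) := by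
    intro k
    conv_lhs => rw [hv]
    rw [map_sum, ContinuousLinearMap.sum_apply]
    exact Finset.sum_congr rfl fun j _ => by
      rw [map_smul, ContinuousLinearMap.smul_apply, smul_eq_mul]
  rw [key (B v)]
  simp only [hBv]
  rw [Finset.sum_comm]
  refine Finset.sum_congr rfl fun j _ => ?_
  rw [Finset.sum_mul]
  exact Finset.sum_congr rfl fun k _ => by ring

private lemma eig_le' {n : ℕ} {A : Matrix (Fin n) (Fin n) ℝ} (hA : A.IsHermitian) {c : ℝ}
    (hQ : ∀ v : EuclideanSpace ℝ (Fin n), ‖v‖ = 1 → ∑ j, ∑ k, A j k * v j * v k ≤ c)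
    (i : Fin n) : hA.eigenvalues i ≤ c := by
  set v : EuclideanSpace ℝ (Fin n) := hA.eigenvectorBasis i with hv
  have hunit : ‖v‖ = 1 := hA.eigenvectorBasis.orthonormal.1 i
  have hmul := hA.mulVec_eigenvectorBasis i
  have h1 : ∀ j, ∑ k, A j k * v k = hA.eigenvalues i * v j := by
    intro j
    have := congrFun hmul j
    simpa [Matrix.mulVec, dotProduct] using this
  have h2 : ∑ j, v j * v j = 1 := by
    have h3 : ‖v‖ ^ 2 = 1 := by rw [hunit]; norm_num
    rw [EuclideanSpace.norm_eq] at h3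
    rw [Real.sq_sqrt (by positivity)] at h3
    calc ∑ j, v j * v j = ∑ j, ‖v j‖ ^ 2 := by
          refine Finset.sum_congr rfl fun j _ => ?_
          rw [Real.norm_eq_abs, sq_abs, pow_two]
      _ = 1 := h3
  have hsum : ∑ j, ∑ k, A j k * v j * v k = hA.eigenvalues i := by
    calc ∑ j, ∑ k, A j k * v j * v k = ∑ j, v j * ∑ k, A j k * v k := by
          refine Finset.sum_congr rfl fun j _ => ?_
          rw [Finset.mul_sum]
          exact Finset.sum_congr rfl fun k _ => by ring
      _ = hA.eigenvalues i * ∑ j, v j * v j := by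
          rw [Finset.mul_sum]
          exact Finset.sum_congr rfl fun j _ => by rw [h1 j]; ring
      _ = hA.eigenvalues i := by rw [h2, mul_one]
  exact le_of_eq_of_le hsum.symm (hQ v hunit)

variable {E : Type*} [NormedAddCommGroup E] [NormedSpace ℝ E]

private lemma line_hasDerivAt' {f : E → ℝ} {U : Set E} (hU : IsOpen U)
    (hf : ContDiffOn ℝ (⊤ : ℕ∞) f U) {x v : E} (s : ℝ) (hs : x + s • v ∈ U) :
    HasDerivAt (fun s' => f (x + s' • v)) (fderiv ℝ f (x + s • v) v) s := by
  have hφ : HasDerivAt (fun s' : ℝ => x + s' • v) v s := by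
    simpa using ((hasDerivAt_id s).smul_const v).const_add x
  have hdf : DifferentiableAt ℝ f (x + s • v) :=
    (hf.differentiableOn (by simp)).differentiableAt (hU.mem_nhds hs)
  exact (hdf.hasFDerivAt.comp_hasDerivAt s hφ)

private lemma line_hasDerivAt2' {f : E → ℝ} {U : Set E} (hU : IsOpen U)
    (hf : ContDiffOn ℝ (⊤ : ℕ∞) f U) {x v : E} (s : ℝ) (hs : x + s • v ∈ U) :
    HasDerivAt (fun s' => fderiv ℝ f (x + s' • v) v)
      (fderiv ℝ (fderiv ℝ f) (x + s • v) v v) s := by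
  have hφ : HasDerivAt (fun s' : ℝ => x + s' • v) v s := by
    simpa using ((hasDerivAt_id s).smul_const v).const_add x
  have hf' : ContDiffOn ℝ (⊤ : ℕ∞) (fderiv ℝ f) U := hf.fderiv_of_isOpen hU (by simp)
  have hdf' : DifferentiableAt ℝ (fderiv ℝ f) (x + s • v) :=
    (hf'.differentiableOn (by simp)).differentiableAt (hU.mem_nhds hs)
  have h1 : HasDerivAt (fun s' => fderiv ℝ f (x + s' • v))
      (fderiv ℝ (fderiv ℝ f) (x + s • v) v) s :=
    hdf'.hasFDerivAt.comp_hasDerivAt s hφ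
  have h2 := ((ContinuousLinearMap.apply ℝ ℝ v).hasFDerivAt.comp_hasDerivAt s h1)
  simpa [Function.comp_def] using h2

private lemma line_cont2' {f : E → ℝ} {U : Set E} (hU : IsOpen U)
    (hf : ContDiffOn ℝ (⊤ : ℕ∞) f U) {x v : E} (hx : x ∈ U) :
    ContinuousAt (fun s : ℝ => fderiv ℝ (fderiv ℝ f) (x + s • v) v v) 0 := by
  have hf' : ContDiffOn ℝ (⊤ : ℕ∞) (fderiv ℝ f) U := hf.fderiv_of_isOpen hU (by simp)
  have hf'' : ContDiffOn ℝ (⊤ : ℕ∞) (fderiv ℝ (fderiv ℝ f)) U := hf'.fderiv_of_isOpen hU (by simp)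
  have hφ : ContinuousAt (fun s : ℝ => x + s • v) 0 := by fun_prop
  have hC : ContinuousAt (fun s : ℝ => fderiv ℝ (fderiv ℝ f) (x + s • v)) 0 := by
    refine ContinuousAt.comp ?_ hφ
    simp only [zero_smul, add_zero]
    exact (hf''.continuousOn.continuousAt (hU.mem_nhds hx))
  exact (((ContinuousLinearMap.apply ℝ ℝ v).continuous.comp
    (ContinuousLinearMap.apply ℝ (E →L[ℝ] ℝ) v).continuous).continuousAt).comp hC

end AuxStmt6

/-- The Hessian matrix of a function on Euclidean space, in coordinates. -/
noncomputable def hess {n : ℕ} (u : EuclideanSpace ℝ (Fin n) → ℝ)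
    (x : EuclideanSpace ℝ (Fin n)) : Matrix (Fin n) (Fin n) ℝ :=
  fun i j => iteratedFDeriv ℝ 2 u x ![EuclideanSpace.single i 1, EuclideanSpace.single j 1]

private lemma hess_eq' {n : ℕ} (f : EuclideanSpace ℝ (Fin n) → ℝ) (x : EuclideanSpace ℝ (Fin n))
    (j k : Fin n) :
    hess f x j k = fderiv ℝ (fderiv ℝ f) x (EuclideanSpace.single j 1)
      (EuclideanSpace.single k 1) := by
  show iteratedFDeriv ℝ 2 f x ![EuclideanSpace.single j 1, EuclideanSpace.single k 1] = _
  rw [iteratedFDeriv_two_apply]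
  simp

theorem stmt6 (n : ℕ) (hn : 1 ≤ n) (R : ℝ) (hR : 0 < R)
    (u : EuclideanSpace ℝ (Fin n) → ℝ → ℝ)
    (hsmooth : ContDiffOn ℝ (⊤ : ℕ∞) (fun p : EuclideanSpace ℝ (Fin n) × ℝ => u p.1 p.2)
      (Metric.closedBall 0 R ×ˢ Set.Icc (0 : ℝ) (1 / n)))
    (hsym : ∀ x ∈ Metric.closedBall (0 : EuclideanSpace ℝ (Fin n)) R,
      ∀ t ∈ Set.Icc (0 : ℝ) (1 / n), (hess (fun y => u y t) x).IsHermitian)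
    (hPDE : ∀ x (hx : x ∈ Metric.closedBall (0 : EuclideanSpace ℝ (Fin n)) R)
      t (ht : t ∈ Set.Icc (0 : ℝ) (1 / n)),
        deriv (u x) t = ∑ i, Real.arctan ((hsym x hx t ht).eigenvalues i))
    (M : ℝ)
    (hmax : IsGreatest ((fun x => u x 0) '' Metric.closedBall (0 : EuclideanSpace ℝ (Fin n)) R) M) :
    u 0 (1 / n) ≤ Real.arctan (Real.pi / R ^ 2) + M := by
  have hn1 : (1:ℝ) ≤ (n:ℝ) := by exact_mod_cast hn
  have hnpos : (0:ℝ) < n := by linarith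
  have hTn : (0:ℝ) < 1/(n:ℝ) := by positivity
  -- genuine time derivative at interior points
  have hderiv : ∀ x : EuclideanSpace ℝ (Fin n), ‖x‖ < R → ∀ t : ℝ, 0 < t → t < 1/(n:ℝ) →
      HasDerivAt (u x) (deriv (u x) t) t := by
    intro x hx t ht0 ht1
    have hS : Metric.closedBall (0 : EuclideanSpace ℝ (Fin n)) R ×ˢ Set.Icc (0 : ℝ) (1 / n)
        ∈ 𝓝 (x, t) := by
      have hopen : IsOpen (Metric.ball (0 : EuclideanSpace ℝ (Fin n)) R ×ˢ
          Set.Ioo (0:ℝ) (1/(n:ℝ))) := Metric.isOpen_ball.prod isOpen_Ioo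
      have hmem : (x, t) ∈ Metric.ball (0 : EuclideanSpace ℝ (Fin n)) R ×ˢ
          Set.Ioo (0:ℝ) (1/(n:ℝ)) := ⟨mem_ball_zero_iff.2 hx, ⟨ht0, ht1⟩⟩
      exact Filter.mem_of_superset (hopen.mem_nhds hmem)
        (Set.prod_mono Metric.ball_subset_closedBall Set.Ioo_subset_Icc_self)
    have hCA : ContDiffAt ℝ (⊤ : ℕ∞) (fun p : EuclideanSpace ℝ (Fin n) × ℝ => u p.1 p.2) (x, t) :=
      hsmooth.contDiffAt hS
    have hu : ContDiffAt ℝ (⊤ : ℕ∞) (u x) t := by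
      have := hCA.comp t ((contDiffAt_const (c := x)).prodMk contDiffAt_id)
      simpa [Function.comp_def] using this
    exact (hu.differentiableAt (by simp)).hasDerivAt
  -- continuity of time slices
  have hslice : ∀ x : EuclideanSpace ℝ (Fin n), ‖x‖ ≤ R →
      ContinuousOn (u x) (Set.Icc (0:ℝ) (1/(n:ℝ))) := by
    intro x hx
    have h1 : Continuous (fun t : ℝ => (x, t)) := by fun_prop
    have h2 : Set.MapsTo (fun t : ℝ => (x, t))
        (Set.Icc (0:ℝ) (1/(n:ℝ))) (Metric.closedBall 0 R ×ˢ Set.Icc (0 : ℝ) (1 / n)) :=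
      fun t ht => ⟨mem_closedBall_zero_iff.2 hx, ht⟩
    exact hsmooth.continuousOn.comp h1.continuousOn h2
  -- boundary-in-time estimate
  have hbd : ∀ x : EuclideanSpace ℝ (Fin n), ‖x‖ < R → ∀ t ∈ Set.Icc (0:ℝ) (1/(n:ℝ)),
      u x t ≤ u x 0 + t*((n:ℝ)*(Real.pi/2)) := by
    intro x hx t ht
    have hxR : x ∈ Metric.closedBall (0 : EuclideanSpace ℝ (Fin n)) R :=
      mem_closedBall_zero_iff.2 hx.le
    set φ : ℝ → ℝ := fun t => t*((n:ℝ)*(Real.pi/2)) - u x t with hφ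
    have hmono : MonotoneOn φ (Set.Icc (0:ℝ) (1/(n:ℝ))) := by
      apply monotoneOn_of_deriv_nonneg (convex_Icc _ _)
      · exact (Continuous.continuousOn (by fun_prop)).sub (hslice x hx.le)
      · intro s hs
        rw [interior_Icc] at hs
        exact ((hasDerivAt_mul_const _).sub (hderiv x hx s hs.1 hs.2)).differentiableAt
          |>.differentiableWithinAt
      · intro s hs
        rw [interior_Icc] at hs
        have hD : HasDerivAt φ ((n:ℝ)*(Real.pi/2) - deriv (u x) s) s := by
          have h1 : HasDerivAt (fun t : ℝ => t*((n:ℝ)*(Real.pi/2))) ((n:ℝ)*(Real.pi/2)) s := by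
            simpa using hasDerivAt_mul_const ((n:ℝ)*(Real.pi/2)) (x := s)
          exact h1.sub (hderiv x hx s hs.1 hs.2)
        rw [hD.deriv]
        have hsIcc : s ∈ Set.Icc (0:ℝ) (1/(n:ℝ)) := ⟨hs.1.le, hs.2.le⟩
        rw [hPDE x hxR s hsIcc]
        have hsum : ∑ i, Real.arctan ((hsym x hxR s hsIcc).eigenvalues i)
            ≤ (Finset.univ : Finset (Fin n)).card • (Real.pi/2) :=
          Finset.sum_le_card_nsmul _ _ _ (fun i _ => (Real.arctan_lt_pi_div_two _).le)
        simp only [Finset.card_univ, Fintype.card_fin, nsmul_eq_mul] at hsum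
        linarith
    have h0 : (0:ℝ) ∈ Set.Icc (0:ℝ) (1/(n:ℝ)) := ⟨le_refl _, hTn.le⟩
    have := hmono h0 ht ht.1
    simp only [hφ, zero_mul, zero_sub] at this
    linarith
  -- the key comparison estimate
  have hkey : ∀ r, 0 < r → r < R → ∀ T, 0 < T → T < 1/(n:ℝ) → ∀ ε : ℝ, 0 < ε →
      u 0 T ≤ M + (n:ℝ)*T*Real.arctan (((n:ℝ)*Real.pi/r^2)*T) + ε*T := by
    intro r hr hrR T hT1 hT2 ε hε
    set c : ℝ := (n:ℝ)*Real.pi/r^2 with hcdef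
    set a : ℝ := (n:ℝ)*Real.pi/(2*r^2) with hadef
    have hca : c = 2*a := by rw [hcdef, hadef]; field_simp
    have hapos : 0 < a := by rw [hadef]; positivity
    have hcpos : 0 < c := by rw [hcdef]; positivity
    set V : EuclideanSpace ℝ (Fin n) × ℝ → ℝ :=
      fun p => u p.1 p.2 - (a*p.2*‖p.1‖^2 + (n:ℝ)*p.2*Real.arctan (c*p.2) + ε*p.2) with hV
    set K : Set (EuclideanSpace ℝ (Fin n) × ℝ) :=
      Metric.closedBall 0 r ×ˢ Set.Icc (0:ℝ) T with hK
    have hKS : K ⊆ Metric.closedBall 0 R ×ˢ Set.Icc (0 : ℝ) (1 / n) :=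
      Set.prod_mono (Metric.closedBall_subset_closedBall hrR.le)
        (Set.Icc_subset_Icc (le_refl _) hT2.le)
    have hKcomp : IsCompact K := (isCompact_closedBall _ _).prod isCompact_Icc
    have hKne : K.Nonempty :=
      ⟨((0 : EuclideanSpace ℝ (Fin n)), (0:ℝ)),
        ⟨Metric.mem_closedBall_self hr.le, ⟨le_refl _, hT1.le⟩⟩⟩
    have hVc : ContinuousOn V K := by
      refine ContinuousOn.sub (hsmooth.continuousOn.mono hKS) ?_
      have harc : Continuous Real.arctan := Real.continuous_arctan
      exact Continuous.continuousOn (by fun_prop)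
    obtain ⟨⟨x₀, t₀⟩, hp₀K, hp₀max⟩ := hKcomp.exists_isMaxOn hKne hVc
    have hx₀r : ‖x₀‖ ≤ r := mem_closedBall_zero_iff.1 hp₀K.1
    have ht₀ : t₀ ∈ Set.Icc (0:ℝ) T := hp₀K.2
    -- it suffices to know the max is at most M
    suffices hVM : V (x₀, t₀) ≤ M by
      have h0K : ((0 : EuclideanSpace ℝ (Fin n)), T) ∈ K :=
        ⟨Metric.mem_closedBall_self hr.le, ⟨hT1.le, le_refl _⟩⟩
      have hle : V ((0 : EuclideanSpace ℝ (Fin n)), T) ≤ V (x₀, t₀) := hp₀max h0K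
      have hV0 : V ((0 : EuclideanSpace ℝ (Fin n)), T)
          = u 0 T - ((n:ℝ)*T*Real.arctan (c*T) + ε*T) := by
        simp [hV]
      rw [hV0] at hle
      linarith
    by_contra hM'
    push_neg at hM'
    rcases eq_or_lt_of_le ht₀.1 with h0 | ht₀pos
    · -- t₀ = 0 : contradiction with u(·,0) ≤ M
      have hVx : V (x₀, t₀) = u x₀ 0 := by rw [← h0]; simp [hV]
      have hle : u x₀ 0 ≤ M :=
        hmax.2 ⟨x₀, mem_closedBall_zero_iff.2 (hx₀r.trans hrR.le), rfl⟩
      rw [hVx] at hM'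
      linarith
    have ht₀Icc : t₀ ∈ Set.Icc (0:ℝ) (1/(n:ℝ)) := ⟨ht₀.1, (ht₀.2.trans hT2.le)⟩
    have harct₀ : 0 ≤ Real.arctan (c*t₀) := by
      rw [← Real.arctan_zero]
      exact Real.arctan_strictMono.monotone (mul_nonneg hcpos.le ht₀.1)
    rcases eq_or_lt_of_le hx₀r with hxr | hx₀lt
    · -- ‖x₀‖ = r : contradiction with the boundary estimate
      exfalso
      have h1 := hbd x₀ (by rw [← hxr] at hrR; exact hrR) t₀ ht₀Icc
      have h2 : u x₀ 0 ≤ M :=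
        hmax.2 ⟨x₀, mem_closedBall_zero_iff.2 (hx₀r.trans hrR.le), rfl⟩
      have h3 : a*t₀*‖x₀‖^2 = t₀*((n:ℝ)*(Real.pi/2)) := by
        rw [hxr, hadef]
        have hr0 : r ≠ 0 := hr.ne'
        field_simp
      have h4 : 0 ≤ (n:ℝ)*t₀*Real.arctan (c*t₀) :=
        mul_nonneg (mul_nonneg hnpos.le ht₀.1) harct₀
      have h5 : 0 ≤ ε*t₀ := mul_nonneg hε.le ht₀.1
      have hVx : V (x₀, t₀)
          = u x₀ t₀ - (a*t₀*‖x₀‖^2 + (n:ℝ)*t₀*Real.arctan (c*t₀) + ε*t₀) := rfl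
      rw [hVx] at hM'
      rw [h3] at hM'
      linarith
    -- interior case
    exfalso
    have hx₀R : ‖x₀‖ < R := hx₀lt.trans hrR
    have hx₀RB : x₀ ∈ Metric.closedBall (0 : EuclideanSpace ℝ (Fin n)) R :=
      mem_closedBall_zero_iff.2 hx₀R.le
    have ht₀1n : t₀ < 1/(n:ℝ) := lt_of_le_of_lt ht₀.2 hT2
    -- spatial smoothness of the slice
    have hf₁ : ContDiffOn ℝ (⊤ : ℕ∞) (fun y => u y t₀)
        (Metric.ball (0 : EuclideanSpace ℝ (Fin n)) R) := by
      have hg : ContDiff ℝ (⊤ : ℕ∞) (fun y : EuclideanSpace ℝ (Fin n) => (y, t₀)) :=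
        contDiff_id.prodMk contDiff_const
      have := hsmooth.comp hg.contDiffOn
        (fun y hy => ⟨Metric.ball_subset_closedBall hy, ht₀Icc⟩)
      simpa [Function.comp_def] using this
    -- quadratic form bound from the second derivative test
    have hQ : ∀ ξ : EuclideanSpace ℝ (Fin n), ‖ξ‖ = 1 →
        fderiv ℝ (fderiv ℝ (fun y => u y t₀)) x₀ ξ ξ ≤ a*t₀*2 := by
      intro ξ hξ
      set δ := r - ‖x₀‖ with hδdef
      have hδpos : 0 < δ := sub_pos.2 hx₀lt
      have hmem : ∀ s : ℝ, |s| < δ → ‖x₀ + s • ξ‖ ≤ r := by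
        intro s hs
        calc ‖x₀ + s•ξ‖ ≤ ‖x₀‖ + ‖s•ξ‖ := norm_add_le _ _
          _ = ‖x₀‖ + |s| := by rw [norm_smul, hξ, Real.norm_eq_abs, mul_one]
          _ ≤ r := by rw [hδdef] at hs; linarith
      have hmemU : ∀ s : ℝ, |s| < δ →
          x₀ + s • ξ ∈ Metric.ball (0 : EuclideanSpace ℝ (Fin n)) R :=
        fun s hs => mem_ball_zero_iff.2 (lt_of_le_of_lt (hmem s hs) hrR)
      have hnorm : ∀ s : ℝ, ‖x₀ + s•ξ‖^2 = ‖x₀‖^2 + 2*s*(inner ℝ x₀ ξ : ℝ) + s^2 := by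
        intro s
        rw [norm_add_sq_real, real_inner_smul_right, norm_smul, Real.norm_eq_abs, hξ,
          mul_one, sq_abs]
        ring
      have hgd : ∀ s ∈ Set.Ioo (-δ) δ, HasDerivAt
          (fun s' : ℝ => u (x₀ + s'•ξ) t₀ - (a*t₀*(‖x₀‖^2 + 2*s'*(inner ℝ x₀ ξ : ℝ) + s'^2)
            + ((n:ℝ)*t₀*Real.arctan (c*t₀) + ε*t₀)))
          (fderiv ℝ (fun y => u y t₀) (x₀ + s•ξ) ξ
            - a*t₀*(2*(inner ℝ x₀ ξ : ℝ) + 2*s)) s := by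
        intro s hs
        have habs : |s| < δ := abs_lt.2 ⟨hs.1, hs.2⟩
        have h1 := line_hasDerivAt' Metric.isOpen_ball hf₁ s (hmemU s habs)
        have h2 : HasDerivAt (fun s : ℝ => 2*s*(inner ℝ x₀ ξ : ℝ)) (2*(inner ℝ x₀ ξ : ℝ)) s := by
          simpa using ((hasDerivAt_id s).const_mul (2:ℝ)).mul_const (inner ℝ x₀ ξ : ℝ)
        have h3 : HasDerivAt (fun s : ℝ => s^2) (2*s) s := by
          simpa using hasDerivAt_pow 2 s
        have h4 : HasDerivAt (fun s : ℝ => ‖x₀‖^2 + 2*s*(inner ℝ x₀ ξ : ℝ) + s^2)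
            (2*(inner ℝ x₀ ξ : ℝ) + 2*s) s := by
          simpa [Pi.add_def] using ((hasDerivAt_const s (‖x₀‖^2)).add h2).add h3
        have hpoly : HasDerivAt (fun s : ℝ => a*t₀*(‖x₀‖^2 + 2*s*(inner ℝ x₀ ξ : ℝ) + s^2)
            + ((n:ℝ)*t₀*Real.arctan (c*t₀) + ε*t₀)) (a*t₀*(2*(inner ℝ x₀ ξ : ℝ) + 2*s)) s := by
          simpa using (h4.const_mul (a*t₀)).add_const ((n:ℝ)*t₀*Real.arctan (c*t₀) + ε*t₀)
        exact h1.sub hpoly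
      have hgd2 : ∀ s ∈ Set.Ioo (-δ) δ, HasDerivAt
          (fun s' : ℝ => fderiv ℝ (fun y => u y t₀) (x₀ + s'•ξ) ξ
            - a*t₀*(2*(inner ℝ x₀ ξ : ℝ) + 2*s'))
          (fderiv ℝ (fderiv ℝ (fun y => u y t₀)) (x₀ + s•ξ) ξ ξ - a*t₀*2) s := by
        intro s hs
        have habs : |s| < δ := abs_lt.2 ⟨hs.1, hs.2⟩
        have h1 := line_hasDerivAt2' Metric.isOpen_ball hf₁ s (hmemU s habs)
        have h5 : HasDerivAt (fun s : ℝ => a*t₀*(2*(inner ℝ x₀ ξ : ℝ) + 2*s)) (a*t₀*2) s := by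
          have h6 : HasDerivAt (fun s : ℝ => 2*(inner ℝ x₀ ξ : ℝ) + 2*s) (2:ℝ) s := by
            simpa [Pi.add_def] using (hasDerivAt_const s (2*(inner ℝ x₀ ξ : ℝ))).add
              ((hasDerivAt_id s).const_mul (2:ℝ))
          simpa [mul_comm] using h6.const_mul (a*t₀)
        exact h1.sub h5
      have hcont'' : ContinuousAt
          (fun s : ℝ => fderiv ℝ (fderiv ℝ (fun y => u y t₀)) (x₀ + s•ξ) ξ ξ - a*t₀*2) 0 :=
        (line_cont2' Metric.isOpen_ball hf₁ (mem_ball_zero_iff.2 hx₀R)).sub continuousAt_const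
      have hmaxg : ∀ s ∈ Set.Ioo (-δ) δ,
          (fun s' : ℝ => u (x₀ + s'•ξ) t₀ - (a*t₀*(‖x₀‖^2 + 2*s'*(inner ℝ x₀ ξ : ℝ) + s'^2)
            + ((n:ℝ)*t₀*Real.arctan (c*t₀) + ε*t₀))) s
          ≤ (fun s' : ℝ => u (x₀ + s'•ξ) t₀ - (a*t₀*(‖x₀‖^2 + 2*s'*(inner ℝ x₀ ξ : ℝ) + s'^2)
            + ((n:ℝ)*t₀*Real.arctan (c*t₀) + ε*t₀))) 0 := by
        intro s hs
        have habs : |s| < δ := abs_lt.2 ⟨hs.1, hs.2⟩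
        have hmemK : (x₀ + s•ξ, t₀) ∈ K := ⟨mem_closedBall_zero_iff.2 (hmem s habs), ht₀⟩
        have h6 := hp₀max hmemK
        have e1 : V (x₀ + s•ξ, t₀) = u (x₀ + s•ξ) t₀
            - (a*t₀*(‖x₀‖^2 + 2*s*(inner ℝ x₀ ξ : ℝ) + s^2)
              + ((n:ℝ)*t₀*Real.arctan (c*t₀) + ε*t₀)) := by
          simp only [hV]
          rw [hnorm s]
          ring
        have e2 : V (x₀, t₀) = u (x₀ + (0:ℝ)•ξ) t₀
            - (a*t₀*(‖x₀‖^2 + 2*(0:ℝ)*(inner ℝ x₀ ξ : ℝ) + (0:ℝ)^2)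
              + ((n:ℝ)*t₀*Real.arctan (c*t₀) + ε*t₀)) := by
          simp only [hV]
          norm_num
          ring
        simp only []
        rw [← e1, ← e2]
        exact h6
      have hB := derivB' hδpos hgd hgd2 hcont'' hmaxg
      have e3 : x₀ + (0:ℝ)•ξ = x₀ := by simp
      rw [e3] at hB
      linarith
    -- eigenvalue bound
    have hlam : ∀ i, (hsym x₀ hx₀RB t₀ ht₀Icc).eigenvalues i ≤ c*t₀ := by
      intro i
      apply eig_le'
      intro v hv
      have hq := quad_expand' (fderiv ℝ (fderiv ℝ (fun y => u y t₀)) x₀) v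
      have hQQ := hQ v hv
      calc ∑ j, ∑ k, hess (fun y => u y t₀) x₀ j k * v j * v k
          = ∑ j, ∑ k, fderiv ℝ (fderiv ℝ (fun y => u y t₀)) x₀ (EuclideanSpace.single j 1)
              (EuclideanSpace.single k 1) * v j * v k := by
            refine Finset.sum_congr rfl fun j _ => Finset.sum_congr rfl fun k _ => ?_
            rw [hess_eq']
        _ = fderiv ℝ (fderiv ℝ (fun y => u y t₀)) x₀ v v := hq.symm
        _ ≤ a*t₀*2 := hQQ
        _ = c*t₀ := by rw [hca]; ring
    -- time derivative at the max point
    have harc1 : HasDerivAt (fun t : ℝ => c*t) c t₀ := by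
      simpa using (hasDerivAt_id t₀).const_mul c
    have harc : HasDerivAt (fun t : ℝ => Real.arctan (c*t)) (c/(1+(c*t₀)^2)) t₀ := by
      have := harc1.arctan
      rw [one_div, div_eq_mul_inv, mul_comm] at *
      simpa [div_eq_mul_inv, mul_comm] using harc1.arctan
    have h3 : HasDerivAt (fun t : ℝ => a*t*‖x₀‖^2) (a*‖x₀‖^2) t₀ := by
      have := ((hasDerivAt_id t₀).const_mul a).mul_const (‖x₀‖^2)
      simpa using this
    have h4 : HasDerivAt (fun t : ℝ => (n:ℝ)*t) (n:ℝ) t₀ := by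
      simpa using (hasDerivAt_id t₀).const_mul (n:ℝ)
    have h5 : HasDerivAt (fun t : ℝ => (n:ℝ)*t*Real.arctan (c*t))
        ((n:ℝ)*Real.arctan (c*t₀) + ((n:ℝ)*t₀)*(c/(1+(c*t₀)^2))) t₀ := h4.mul harc
    have h6 : HasDerivAt (fun t : ℝ => ε*t) ε t₀ := by
      simpa using (hasDerivAt_id t₀).const_mul ε
    have hu' : HasDerivAt (u x₀) (deriv (u x₀) t₀) t₀ := hderiv x₀ hx₀R t₀ ht₀pos ht₀1n
    have hφ' : HasDerivAt (fun t => V (x₀, t))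
        (deriv (u x₀) t₀ - ((a*‖x₀‖^2 + ((n:ℝ)*Real.arctan (c*t₀)
          + ((n:ℝ)*t₀)*(c/(1+(c*t₀)^2)))) + ε)) t₀ :=
      hu'.sub ((h3.add h5).add h6)
    have hmaxt : ∀ t ∈ Set.Icc (0:ℝ) t₀, (fun t => V (x₀, t)) t ≤ (fun t => V (x₀, t)) t₀ :=
      fun t ht' => hp₀max ⟨hp₀K.1, ⟨ht'.1, ht'.2.trans ht₀.2⟩⟩
    have h7 := derivA' ht₀pos hφ' hmaxt
    rw [hPDE x₀ hx₀RB t₀ ht₀Icc] at h7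
    have h8 : ∑ i, Real.arctan ((hsym x₀ hx₀RB t₀ ht₀Icc).eigenvalues i)
        ≤ (Finset.univ : Finset (Fin n)).card • Real.arctan (c*t₀) :=
      Finset.sum_le_card_nsmul _ _ _
        (fun i _ => Real.arctan_strictMono.monotone (hlam i))
    simp only [Finset.card_univ, Fintype.card_fin, nsmul_eq_mul] at h8
    have h9 : 0 ≤ a*‖x₀‖^2 := by positivity
    have h10 : 0 ≤ ((n:ℝ)*t₀)*(c/(1+(c*t₀)^2)) :=
      mul_nonneg (mul_nonneg hnpos.le ht₀.1) (div_nonneg hcpos.le (by positivity))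
    linarith
  -- pass to the limits ε → 0, T → 1/n, r → R
  have hUc : ContinuousOn (u 0) (Set.Icc (0:ℝ) (1/(n:ℝ))) := hslice 0 (by simp [hR.le])
  have hstep1 : ∀ r, 0 < r → r < R → u 0 (1/(n:ℝ)) ≤ M + Real.arctan (Real.pi/r^2) := by
    intro r hr hrR
    have h2 : ∀ ε : ℝ, 0 < ε → u 0 (1/(n:ℝ)) ≤ M + Real.arctan (Real.pi/r^2) + ε := by
      intro ε hε
      have hF : (𝓝[Set.Ioo (0:ℝ) (1/(n:ℝ))] (1/(n:ℝ))).NeBot := by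
        rw [← mem_closure_iff_nhdsWithin_neBot, closure_Ioo (ne_of_lt hTn)]
        exact ⟨hTn.le, le_refl _⟩
      haveI := hF
      have hlhs : Filter.Tendsto (u 0) (𝓝[Set.Ioo (0:ℝ) (1/(n:ℝ))] (1/(n:ℝ)))
          (𝓝 (u 0 (1/(n:ℝ)))) :=
        ((hUc (1/(n:ℝ)) ⟨hTn.le, le_refl _⟩).mono Set.Ioo_subset_Icc_self)
      have hrhs : Filter.Tendsto
          (fun T => M + (n:ℝ)*T*Real.arctan (((n:ℝ)*Real.pi/r^2)*T) + (ε*n)*T)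
          (𝓝[Set.Ioo (0:ℝ) (1/(n:ℝ))] (1/(n:ℝ)))
          (𝓝 (M + (n:ℝ)*(1/(n:ℝ))*Real.arctan (((n:ℝ)*Real.pi/r^2)*(1/(n:ℝ)))
            + (ε*n)*(1/(n:ℝ)))) := by
        apply Continuous.continuousWithinAt
        have : Continuous Real.arctan := Real.continuous_arctan
        fun_prop
      have hevle : u 0 ≤ᶠ[𝓝[Set.Ioo (0:ℝ) (1/(n:ℝ))] (1/(n:ℝ))]
          (fun T => M + (n:ℝ)*T*Real.arctan (((n:ℝ)*Real.pi/r^2)*T) + (ε*n)*T) := by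
        filter_upwards [self_mem_nhdsWithin] with T hT
        exact hkey r hr hrR T hT.1 hT.2 (ε*n) (by positivity)
      have hle := le_of_tendsto_of_tendsto hlhs hrhs hevle
      have e1 : (n:ℝ)*(1/n) = 1 := by field_simp
      have e2 : ((n:ℝ)*Real.pi/r^2)*(1/n) = Real.pi/r^2 := by field_simp
      have e3 : (ε*(n:ℝ))*(1/n) = ε := by field_simp
      rw [e1, e2, e3, one_mul] at hle
      exact hle
    by_contra hcon
    push_neg at hcon
    have := h2 ((u 0 (1/(n:ℝ)) - (M + Real.arctan (Real.pi/r^2)))/2) (by linarith)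
    linarith
  have hF2 : (𝓝[Set.Ioo (0:ℝ) R] R).NeBot := by
    rw [← mem_closure_iff_nhdsWithin_neBot, closure_Ioo (ne_of_lt hR)]
    exact ⟨hR.le, le_refl _⟩
  have htend : Filter.Tendsto (fun r => M + Real.arctan (Real.pi/r^2))
      (𝓝[Set.Ioo (0:ℝ) R] R) (𝓝 (M + Real.arctan (Real.pi/R^2))) := by
    apply ContinuousAt.continuousWithinAt
    have h1 : ContinuousAt (fun r : ℝ => Real.pi/r^2) R :=
      ContinuousAt.div continuousAt_const (by fun_prop) (pow_ne_zero _ hR.ne')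
    exact continuousAt_const.add (Real.continuous_arctan.continuousAt.comp h1)
  have hfinal : u 0 (1/(n:ℝ)) ≤ M + Real.arctan (Real.pi/R^2) := by
    refine ge_of_tendsto htend ?_
    filter_upwards [self_mem_nhdsWithin] with r hr
    exact hstep1 r hr.1 hr.2
  linarith
end

section
/- Let h = η·b where b > 0 is smooth, η ≥ 0 is smooth, and L = ∂_t − g^{ij}∂_{ij} for a positive definite g^{ij}. Suppose h attains a positive interior maximum at (x₀,t₀) with t₀ > 0, and suppose Lb + 2g^{ij}b_i b_j/b ≤ 0 everywhere. Then at (x₀,t₀): η_t − g^{ij}η_{ij} ≥ 0. -/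
open Filter Set Topology

lemma aux_left {f : ℝ → ℝ} {f' t₀ : ℝ} (hd : HasDerivAt f f' t₀)
    (hmax : ∀ t ≤ t₀, f t ≤ f t₀) : 0 ≤ f' := by
  have hs := hasDerivAt_iff_tendsto_slope.1 hd
  have hs' : Tendsto (slope f t₀) (𝓝[<] t₀) (𝓝 f') :=
    hs.mono_left (nhdsWithin_mono _ (fun t ht => ne_of_lt ht))
  refine ge_of_tendsto hs' ?_
  filter_upwards [self_mem_nhdsWithin] with t ht
  have ht' : t < t₀ := ht
  have h1 : f t ≤ f t₀ := hmax t (le_of_lt ht')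
  have : slope f t₀ t = (f t₀ - f t) / (t₀ - t) := by
    rw [slope_def_field]; rw [div_eq_div_iff (by linarith) (by linarith)]; ring
  rw [this]
  exact div_nonneg (by linarith) (by linarith)

lemma aux_1d {ψ ψ' : ℝ → ℝ} {c : ℝ}
    (hd : ∀ s, HasDerivAt ψ (ψ' s) s)
    (hc : Continuous ψ)
    (h0 : ψ' 0 = 0)
    (h2 : HasDerivAt ψ' c 0)
    (hmax : ∀ s, ψ s ≤ ψ 0) : c ≤ 0 := by
  by_contra hcpos
  push_neg at hcpos
  have hs := hasDerivAt_iff_tendsto_slope.1 h2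
  have hs' : Tendsto (slope ψ' 0) (𝓝[>] 0) (𝓝 c) :=
    hs.mono_left (nhdsWithin_mono _ (fun t ht => ne_of_gt ht))
  have hev : ∀ᶠ s in 𝓝[>] (0:ℝ), 0 < slope ψ' 0 s :=
    hs'.eventually (eventually_gt_nhds hcpos)
  obtain ⟨ε, hε, hsub⟩ := mem_nhdsGT_iff_exists_Ioo_subset.1 hev
  have hεpos : (0:ℝ) < ε := hε
  have hpos : ∀ s ∈ Ioo (0:ℝ) ε, 0 < ψ' s := by
    intro s hsm
    have := hsub hsm
    simp only [mem_setOf_eq, slope_def_field, h0, sub_zero] at this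
    have hs0 : 0 < s := hsm.1
    have := mul_pos this hs0
    rwa [div_mul_cancel₀ _ (ne_of_gt hs0)] at this
  have hmono : StrictMonoOn ψ (Icc 0 ε) := by
    apply strictMonoOn_of_deriv_pos (convex_Icc 0 ε) (hc.continuousOn)
    intro s hsm
    rw [interior_Icc] at hsm
    rw [(hd s).deriv]
    exact hpos s hsm
  have := hmono (left_mem_Icc.2 hεpos.le) (right_mem_Icc.2 hεpos.le) hεpos
  exact absurd (hmax ε) (not_le.2 this)

set_option maxHeartbeats 1000000 in
theorem stmt18 (n : ℕ) (hn : 1 ≤ n)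
    (g : EuclideanSpace ℝ (Fin n) → ℝ → Matrix (Fin n) (Fin n) ℝ)
    (hgpos : ∀ x t, (g x t).PosDef)
    (b η : EuclideanSpace ℝ (Fin n) → ℝ → ℝ)
    (hbsmooth : ContDiff ℝ (⊤ : ℕ∞) (fun p : EuclideanSpace ℝ (Fin n) × ℝ => b p.1 p.2))
    (hηsmooth : ContDiff ℝ (⊤ : ℕ∞) (fun p : EuclideanSpace ℝ (Fin n) × ℝ => η p.1 p.2))
    (hbpos : ∀ x t, 0 < b x t) (hηnn : ∀ x t, 0 ≤ η x t)
    (hJacobi : ∀ x t,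
      (deriv (b x) t
          - ∑ i, ∑ j, g x t i j *
              iteratedFDeriv ℝ 2 (fun y => b y t) x
                ![EuclideanSpace.single i 1, EuclideanSpace.single j 1])
        + 2 * (∑ i, ∑ j, g x t i j *
              fderiv ℝ (fun y => b y t) x (EuclideanSpace.single i 1) *
              fderiv ℝ (fun y => b y t) x (EuclideanSpace.single j 1)) / b x t ≤ 0)
    (x₀ : EuclideanSpace ℝ (Fin n)) (t₀ : ℝ) (ht₀ : 0 < t₀)
    (hmaxpos : 0 < η x₀ t₀ * b x₀ t₀)
    (hmax : IsMaxOn (fun p : EuclideanSpace ℝ (Fin n) × ℝ => η p.1 p.2 * b p.1 p.2)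
      {p : EuclideanSpace ℝ (Fin n) × ℝ | p.2 ≤ t₀} (x₀, t₀)) :
    deriv (η x₀) t₀
        - ∑ i, ∑ j, g x₀ t₀ i j *
            iteratedFDeriv ℝ 2 (fun y => η y t₀) x₀
              ![EuclideanSpace.single i 1, EuclideanSpace.single j 1] ≥ 0 := by
  classical
  have B0pos : 0 < b x₀ t₀ := hbpos x₀ t₀
  have B0ne : b x₀ t₀ ≠ 0 := ne_of_gt B0pos
  have E0nn : 0 ≤ η x₀ t₀ := hηnn x₀ t₀
  -- slice smoothness
  have hB : ContDiff ℝ (⊤ : ℕ∞) (fun y => b y t₀) :=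
    hbsmooth.comp (contDiff_id.prodMk contDiff_const)
  have hN : ContDiff ℝ (⊤ : ℕ∞) (fun y => η y t₀) :=
    hηsmooth.comp (contDiff_id.prodMk contDiff_const)
  have hφ : ContDiff ℝ (⊤ : ℕ∞) (fun y => η y t₀ * b y t₀) := hN.mul hB
  have hbt : ContDiff ℝ (⊤ : ℕ∞) (b x₀) := hbsmooth.comp (contDiff_const.prodMk contDiff_id)
  have hηt : ContDiff ℝ (⊤ : ℕ∞) (η x₀) := hηsmooth.comp (contDiff_const.prodMk contDiff_id)
  set φ : EuclideanSpace ℝ (Fin n) → ℝ := fun y => η y t₀ * b y t₀ with hφdef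
  -- max of φ over all space
  have hφmax : ∀ y, φ y ≤ φ x₀ := fun y => hmax (show ((y, t₀) : _ × ℝ).2 ≤ t₀ from le_refl t₀)
  -- first derivative of φ vanishes
  have hDφ0 : fderiv ℝ φ x₀ = 0 := by
    have hloc : IsLocalMax φ x₀ := Filter.Eventually.of_forall hφmax
    exact hloc.fderiv_eq_zero
  -- product rule (everywhere)
  have hDφ : ∀ x, fderiv ℝ φ x =
      η x t₀ • fderiv ℝ (fun y => b y t₀) x + b x t₀ • fderiv ℝ (fun y => η y t₀) x :=
    fun x => fderiv_mul (hN.differentiable (by simp) x) (hB.differentiable (by simp) x)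
  -- gradient relation
  have hgrad : ∀ v : EuclideanSpace ℝ (Fin n),
      η x₀ t₀ * fderiv ℝ (fun y => b y t₀) x₀ v
        + b x₀ t₀ * fderiv ℝ (fun y => η y t₀) x₀ v = 0 := by
    intro v
    have := congrArg (fun (L : _ →L[ℝ] ℝ) => L v) ((hDφ x₀).symm.trans hDφ0)
    simpa [smul_eq_mul] using this
  -- Hessian product rule at x₀
  have hHess : ∀ u v, fderiv ℝ (fderiv ℝ φ) x₀ u v =
      η x₀ t₀ * (fderiv ℝ (fderiv ℝ (fun y => b y t₀)) x₀ u v)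
        + (fderiv ℝ (fun y => η y t₀) x₀ u) * (fderiv ℝ (fun y => b y t₀) x₀ v)
        + (fderiv ℝ (fun y => b y t₀) x₀ u) * (fderiv ℝ (fun y => η y t₀) x₀ v)
        + b x₀ t₀ * (fderiv ℝ (fderiv ℝ (fun y => η y t₀)) x₀ u v) := by
    intro u v
    have hDB : ContDiff ℝ (⊤ : ℕ∞) (fderiv ℝ (fun y => b y t₀)) := hB.fderiv_right (by simp)
    have hDN : ContDiff ℝ (⊤ : ℕ∞) (fderiv ℝ (fun y => η y t₀)) := hN.fderiv_right (by simp)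
    have h1 : fderiv ℝ (fderiv ℝ φ) x₀ =
        fderiv ℝ (fun x => η x t₀ • fderiv ℝ (fun y => b y t₀) x
          + b x t₀ • fderiv ℝ (fun y => η y t₀) x) x₀ :=
      Filter.EventuallyEq.fderiv_eq (Filter.Eventually.of_forall hDφ)
    have d1 : DifferentiableAt ℝ (fun x => η x t₀) x₀ := hN.differentiable (by simp) x₀
    have d2 : DifferentiableAt ℝ (fun x => b x t₀) x₀ := hB.differentiable (by simp) x₀
    have d3 : DifferentiableAt ℝ (fderiv ℝ (fun y => b y t₀)) x₀ := hDB.differentiable (by simp) x₀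
    have d4 : DifferentiableAt ℝ (fderiv ℝ (fun y => η y t₀)) x₀ := hDN.differentiable (by simp) x₀
    rw [h1, fderiv_fun_add (d1.fun_smul d3) (d2.fun_smul d4), fderiv_fun_smul d1 d3, fderiv_fun_smul d2 d4]
    simp only [ContinuousLinearMap.add_apply, ContinuousLinearMap.smul_apply,
      ContinuousLinearMap.smulRight_apply, smul_eq_mul]
    ring
  -- negative semidefiniteness of Hessian of φ
  have hneg : ∀ v : EuclideanSpace ℝ (Fin n), fderiv ℝ (fderiv ℝ φ) x₀ v v ≤ 0 := by
    intro v
    have hline : ∀ s : ℝ, HasDerivAt (fun s : ℝ => x₀ + s • v) v s := by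
      intro s
      simpa using (((hasDerivAt_id s).smul_const v).const_add x₀)
    have h00 : x₀ + (0:ℝ) • v = x₀ := by simp
    have hd : ∀ s : ℝ, HasDerivAt (fun s : ℝ => φ (x₀ + s • v))
        (fderiv ℝ φ (x₀ + s • v) v) s := by
      intro s
      exact ((hφ.differentiable (by simp) (x₀ + s • v)).hasFDerivAt.comp_hasDerivAt s (hline s))
    have hcont : Continuous (fun s : ℝ => φ (x₀ + s • v)) := by
      exact (hφ.continuous).comp (continuous_const.add (continuous_id.smul continuous_const))
    have h0 : fderiv ℝ φ (x₀ + (0:ℝ) • v) v = 0 := by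
      rw [h00, hDφ0]; rfl
    have hDφdiff : ContDiff ℝ (⊤ : ℕ∞) (fderiv ℝ φ) := hφ.fderiv_right (by simp)
    have hF : HasFDerivAt (fderiv ℝ φ) (fderiv ℝ (fderiv ℝ φ) x₀) (x₀ + (0:ℝ) • v) := by
      rw [h00]; exact (hDφdiff.differentiable (by simp) x₀).hasFDerivAt
    have h2' : HasDerivAt (fun s : ℝ => fderiv ℝ φ (x₀ + s • v))
        (fderiv ℝ (fderiv ℝ φ) x₀ v) 0 := hF.comp_hasDerivAt 0 (hline 0)
    have h2 : HasDerivAt (fun s : ℝ => fderiv ℝ φ (x₀ + s • v) v)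
        (fderiv ℝ (fderiv ℝ φ) x₀ v v) 0 := by
      simpa using h2'.clm_apply (hasDerivAt_const 0 v)
    have hmax' : ∀ s : ℝ, φ (x₀ + s • v) ≤ φ (x₀ + (0:ℝ) • v) := by
      intro s; rw [h00]; exact hφmax _
    exact aux_1d hd hcont h0 h2 hmax'
  -- convert iterated derivatives to fderiv-of-fderiv
  have hconv : ∀ (f : EuclideanSpace ℝ (Fin n) → ℝ) (i j : Fin n),
      iteratedFDeriv ℝ 2 f x₀ ![EuclideanSpace.single i 1, EuclideanSpace.single j 1]
        = fderiv ℝ (fderiv ℝ f) x₀ (EuclideanSpace.single i 1) (EuclideanSpace.single j 1) := by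
    intro f i j
    rw [iteratedFDeriv_two_apply]
    simp
  have hJ := hJacobi x₀ t₀
  simp only [hconv] at hJ ⊢
  -- trace inequality
  obtain ⟨A, hA⟩ : ∃ B : Matrix (Fin n) (Fin n) ℝ, g x₀ t₀ = B.conjTranspose * B := by
    open scoped MatrixOrder in
    obtain ⟨X, hX, -, hXe⟩ := CFC.exists_sqrt_of_isSelfAdjoint_of_quasispectrumRestricts
      (hgpos x₀ t₀).posSemidef.isHermitian
      (QuasispectrumRestricts.nnreal_of_nonneg (hgpos x₀ t₀).posSemidef.nonneg)
    exact ⟨X, by rw [← hXe]; congr 1; exact hX.star_eq.symm⟩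
  have hG : ∀ i j, g x₀ t₀ i j = ∑ k, A k i * A k j := by
    intro i j
    rw [hA]
    simp [Matrix.mul_apply, Matrix.conjTranspose_apply]
  have hbil : ∀ k, fderiv ℝ (fderiv ℝ φ) x₀ (∑ i, A k i • EuclideanSpace.single i 1)
        (∑ j, A k j • EuclideanSpace.single j 1)
      = ∑ i, ∑ j, A k i * A k j *
          fderiv ℝ (fderiv ℝ φ) x₀ (EuclideanSpace.single i 1) (EuclideanSpace.single j 1) := by
    intro k
    simp only [map_sum, map_smul, ContinuousLinearMap.sum_apply, ContinuousLinearMap.smul_apply,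
      smul_eq_mul, Finset.mul_sum]
    rw [Finset.sum_comm]
    exact Finset.sum_congr rfl fun i _ => Finset.sum_congr rfl fun j _ => by ring
  have hT : (∑ i, ∑ j, g x₀ t₀ i j *
      fderiv ℝ (fderiv ℝ φ) x₀ (EuclideanSpace.single i 1) (EuclideanSpace.single j 1)) ≤ 0 := by
    have heq : (∑ i, ∑ j, g x₀ t₀ i j *
        fderiv ℝ (fderiv ℝ φ) x₀ (EuclideanSpace.single i 1) (EuclideanSpace.single j 1))
        = ∑ k, fderiv ℝ (fderiv ℝ φ) x₀ (∑ i, A k i • EuclideanSpace.single i 1)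
            (∑ j, A k j • EuclideanSpace.single j 1) := by
      simp only [hG, Finset.sum_mul, hbil]
      calc (∑ i, ∑ j, ∑ k, A k i * A k j *
              fderiv ℝ (fderiv ℝ φ) x₀ (EuclideanSpace.single i 1) (EuclideanSpace.single j 1))
          = ∑ i, ∑ k, ∑ j, A k i * A k j *
              fderiv ℝ (fderiv ℝ φ) x₀ (EuclideanSpace.single i 1) (EuclideanSpace.single j 1) :=
            Finset.sum_congr rfl (fun i _ => Finset.sum_comm)
        _ = ∑ k, ∑ i, ∑ j, A k i * A k j *
              fderiv ℝ (fderiv ℝ φ) x₀ (EuclideanSpace.single i 1) (EuclideanSpace.single j 1) :=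
            Finset.sum_comm
    rw [heq]
    exact Finset.sum_nonpos fun k _ => hneg _
  -- gradient relation, componentwise
  have hDη : ∀ i : Fin n, fderiv ℝ (fun y => η y t₀) x₀ (EuclideanSpace.single i 1)
      = -(η x₀ t₀ * fderiv ℝ (fun y => b y t₀) x₀ (EuclideanSpace.single i 1)) / b x₀ t₀ := by
    intro i
    have := hgrad (EuclideanSpace.single i 1)
    field_simp
    linarith
  -- expansion of the Hessian trace
  have hTexp : (∑ i, ∑ j, g x₀ t₀ i j *
      fderiv ℝ (fderiv ℝ φ) x₀ (EuclideanSpace.single i 1) (EuclideanSpace.single j 1))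
      = η x₀ t₀ * (∑ i, ∑ j, g x₀ t₀ i j *
            fderiv ℝ (fderiv ℝ (fun y => b y t₀)) x₀ (EuclideanSpace.single i 1)
              (EuclideanSpace.single j 1))
        + (-(2 * η x₀ t₀) / b x₀ t₀) * (∑ i, ∑ j, g x₀ t₀ i j *
            fderiv ℝ (fun y => b y t₀) x₀ (EuclideanSpace.single i 1) *
            fderiv ℝ (fun y => b y t₀) x₀ (EuclideanSpace.single j 1))
        + b x₀ t₀ * (∑ i, ∑ j, g x₀ t₀ i j *
            fderiv ℝ (fderiv ℝ (fun y => η y t₀)) x₀ (EuclideanSpace.single i 1)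
              (EuclideanSpace.single j 1)) := by
    have hterm : ∀ i j : Fin n, g x₀ t₀ i j *
        fderiv ℝ (fderiv ℝ φ) x₀ (EuclideanSpace.single i 1) (EuclideanSpace.single j 1)
        = η x₀ t₀ * (g x₀ t₀ i j *
              fderiv ℝ (fderiv ℝ (fun y => b y t₀)) x₀ (EuclideanSpace.single i 1)
                (EuclideanSpace.single j 1))
          + (-(2 * η x₀ t₀) / b x₀ t₀) * (g x₀ t₀ i j *
              fderiv ℝ (fun y => b y t₀) x₀ (EuclideanSpace.single i 1) *
              fderiv ℝ (fun y => b y t₀) x₀ (EuclideanSpace.single j 1))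
          + b x₀ t₀ * (g x₀ t₀ i j *
              fderiv ℝ (fderiv ℝ (fun y => η y t₀)) x₀ (EuclideanSpace.single i 1)
                (EuclideanSpace.single j 1)) := by
      intro i j
      rw [hHess, hDη, hDη]
      field_simp
      ring
    simp only [hterm, Finset.sum_add_distrib, ← Finset.mul_sum]
  -- time derivative inequality
  have hd_t : HasDerivAt (fun t => η x₀ t * b x₀ t)
      (deriv (η x₀) t₀ * b x₀ t₀ + η x₀ t₀ * deriv (b x₀) t₀) t₀ :=
    ((hηt.differentiable (by simp) t₀).hasDerivAt).mul ((hbt.differentiable (by simp) t₀).hasDerivAt)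
  have htime : 0 ≤ deriv (η x₀) t₀ * b x₀ t₀ + η x₀ t₀ * deriv (b x₀) t₀ := by
    refine aux_left hd_t ?_
    intro t ht
    exact hmax (show ((x₀, t) : _ × ℝ).2 ≤ t₀ from ht)
  -- final algebra
  rw [hTexp] at hT
  set Sb2 := (∑ i, ∑ j, g x₀ t₀ i j *
      fderiv ℝ (fderiv ℝ (fun y => b y t₀)) x₀ (EuclideanSpace.single i 1)
        (EuclideanSpace.single j 1)) with hSb2
  set Sη := (∑ i, ∑ j, g x₀ t₀ i j *
      fderiv ℝ (fderiv ℝ (fun y => η y t₀)) x₀ (EuclideanSpace.single i 1)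
        (EuclideanSpace.single j 1)) with hSη
  set P := (∑ i, ∑ j, g x₀ t₀ i j *
      fderiv ℝ (fun y => b y t₀) x₀ (EuclideanSpace.single i 1) *
      fderiv ℝ (fun y => b y t₀) x₀ (EuclideanSpace.single j 1)) with hP
  -- clear denominators in hJ and hT
  have hJ' : (deriv (b x₀) t₀ - Sb2) * b x₀ t₀ + 2 * P ≤ 0 := by
    have := mul_le_mul_of_nonneg_right hJ B0pos.le
    rw [add_mul, div_mul_cancel₀ _ B0ne, zero_mul] at this
    linarith
  have hT' : η x₀ t₀ * Sb2 * b x₀ t₀ + -(2 * η x₀ t₀) * P + b x₀ t₀ * Sη * b x₀ t₀ ≤ 0 := by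
    have h := mul_le_mul_of_nonneg_right hT B0pos.le
    have hcan : -(2 * η x₀ t₀) / b x₀ t₀ * P * b x₀ t₀ = -(2 * η x₀ t₀) * P := by
      field_simp
    rw [add_mul, add_mul, hcan, zero_mul] at h
    linarith
  have hJ'' : η x₀ t₀ * ((deriv (b x₀) t₀ - Sb2) * b x₀ t₀ + 2 * P) ≤ 0 :=
    mul_nonpos_of_nonneg_of_nonpos E0nn hJ'
  have hB2 : 0 < b x₀ t₀ * b x₀ t₀ := mul_pos B0pos B0pos
  have h1 : 0 ≤ (deriv (η x₀) t₀ * b x₀ t₀ + η x₀ t₀ * deriv (b x₀) t₀) * b x₀ t₀ :=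
    mul_nonneg htime B0pos.le
  nlinarith [h1, hT', hJ'', hB2]
end
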